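/- arXiv:cs/0610077 — 4 statements merged into one kernel-verified Lean document; each statement's English description precedes it below -/
import Mathlib

section
/- For any positive semidefinite Hermitian matrices A, B ∈ ℂ^{N×N}, log det(I + A + B) − log det(I + B) ≤ log det(I + A). -/
/-!
Write `M = 1 + A` and `B = Rᴴ R`. The Weinstein–Aronszajn identity gives
`det (M + B) = det M * det (1 + R M⁻¹ Rᴴ)`. Since `M⁻¹ ≤ 1` in the Loewner order and the
determinant is monotone on positive definite matrices, the second factor is at most
`det (1 + R Rᴴ) = det (1 + B)`, so `det (1 + A + B) ≤ det (1 + A) * det (1 + B)`.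
-/

open Matrix Real
open scoped ComplexOrder MatrixOrder

namespace Matrix

variable {n 𝕜 : Type*} [Fintype n] [DecidableEq n] [RCLike 𝕜]

lemma PosSemidef.one_le_det_one_add {X : Matrix n n 𝕜} (hX : X.PosSemidef) :
    1 ≤ (1 + X).det := by
  have hdet : (1 + X).det = ∏ i, (1 + hX.1.eigenvalues i : 𝕜) := by
    conv_lhs =>
      rw [hX.1.spectral_theorem, ← map_one (Unitary.conjStarAlgAut 𝕜 _ hX.1.eigenvectorUnitary),
        ← map_add]
    rw [Unitary.conjStarAlgAut_apply, det_mul_right_comm,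
      Unitary.mul_star_self_of_mem hX.1.eigenvectorUnitary.2, one_mul]
    simp [← diagonal_one, diagonal_add]
  rw [hdet]
  exact Finset.one_le_prod fun i _ => by simpa using hX.eigenvalues_nonneg i

lemma PosDef.det_le_det_of_le {P Q : Matrix n n 𝕜} (hP : P.PosDef) (hPQ : P ≤ Q) :
    P.det ≤ Q.det := by
  obtain ⟨S, hS⟩ : ∃ S : Matrix n n 𝕜, Q - P = star S * S :=
    CStarAlgebra.nonneg_iff_eq_star_mul_self.mp (sub_nonneg.mpr hPQ)
  have hQ : Q = P + Sᴴ * S := by rw [← star_eq_conjTranspose, ← hS, add_sub_cancel]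
  have hSPS : (S * P⁻¹ * Sᴴ).PosSemidef := hP.inv.posSemidef.mul_mul_conjTranspose_same S
  calc P.det = P.det * 1 := (mul_one _).symm
    _ ≤ P.det * (1 + S * P⁻¹ * Sᴴ).det :=
      mul_le_mul_of_nonneg_left hSPS.one_le_det_one_add hP.det_pos.le
    _ = Q.det := by rw [hQ, det_add_mul _ _ hP.det_pos.ne'.isUnit]

lemma PosSemidef.inv_one_add_le_one {A : Matrix n n 𝕜} (hA : A.PosSemidef) :
    (1 + A)⁻¹ ≤ 1 := by
  set M := 1 + A
  have hM : M.PosDef := PosDef.one.add_posSemidef hA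
  have hMu : IsUnit M.det := hM.det_pos.ne'.isUnit
  have hMsq : M ≤ M * M := by
    rw [le_iff, show M * M - M = A + Aᴴ * A by
      rw [hA.isHermitian.eq]; simp only [M]; noncomm_ring]
    exact hA.add (posSemidef_conjTranspose_mul_self A)
  calc M⁻¹ = M⁻¹ * M * star M⁻¹ := by
        rw [nonsing_inv_mul _ hMu, one_mul, star_eq_conjTranspose, hM.inv.isHermitian.eq]
    _ ≤ M⁻¹ * (M * M) * star M⁻¹ := star_right_conjugate_le_conjugate hMsq _
    _ = 1 := by
        rw [← Matrix.mul_assoc, nonsing_inv_mul _ hMu, one_mul, star_eq_conjTranspose,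
          hM.inv.isHermitian.eq, mul_nonsing_inv _ hMu]

lemma PosSemidef.det_one_add_add_le {A B : Matrix n n 𝕜} (hA : A.PosSemidef)
    (hB : B.PosSemidef) : (1 + A + B).det ≤ (1 + A).det * (1 + B).det := by
  set M := 1 + A
  have hM : M.PosDef := PosDef.one.add_posSemidef hA
  obtain ⟨R, rfl⟩ : ∃ R : Matrix n n 𝕜, B = star R * R :=
    CStarAlgebra.nonneg_iff_eq_star_mul_self.mp hB.nonneg
  rw [star_eq_conjTranspose, det_add_mul _ _ hM.det_pos.ne'.isUnit, det_one_add_mul_comm Rᴴ]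
  refine mul_le_mul_of_nonneg_left (PosDef.det_le_det_of_le ?_ ?_) hM.det_pos.le
  · exact PosDef.one.add_posSemidef (hM.inv.posSemidef.mul_mul_conjTranspose_same R)
  · simpa [star_eq_conjTranspose] using
      add_le_add_left (star_right_conjugate_le_conjugate hA.inv_one_add_le_one R) 1

end Matrix

/-- For Hermitian positive semidefinite `A, B ∈ ℂ^{N×N}`:
`log det(I + A + B) − log det(I + B) ≤ log det(I + A)`. -/
theorem logdet_add_sub_le_left {N : ℕ} (A B : Matrix (Fin N) (Fin N) ℂ)
    (hA : A.PosSemidef) (hB : B.PosSemidef) :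
    Real.log ((1 + A + B).det.re) - Real.log ((1 + B).det.re) ≤
      Real.log ((1 + A).det.re) := by
  have hApos := Complex.pos_iff.mp (PosDef.one.add_posSemidef hA).det_pos
  have hBpos := Complex.pos_iff.mp (PosDef.one.add_posSemidef hB).det_pos
  have hABpos := Complex.pos_iff.mp ((PosDef.one.add_posSemidef hA).add_posSemidef hB).det_pos
  have hle : (1 + A + B).det.re ≤ (1 + A).det.re * (1 + B).det.re := by
    simpa [← hApos.2] using (Complex.le_def.mp (hA.det_one_add_add_le hB)).1
  rw [sub_le_iff_le_add, ← Real.log_mul hApos.1.ne' hBpos.1.ne']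
  exact Real.log_le_log hABpos.1 hle
end

section
/- Let V, H̃ ∈ ℂ^{M×N} be orthonormal (V^H V = H̃^H H̃ = I_N) with V orthogonal to the quantization Ĥ of H̃, i.e., Ĥ^H V = 0, where Ĥ is also orthonormal. Then tr(H̃^H V V^H H̃) ≤ d²(H̃, Ĥ), i.e., the interference power leaked into the nullspace of the quantized channel is bounded by the chordal quantization error. -/
open Matrix Real

lemma trace_conjTranspose_mul_self_re_nonneg {m n : ℕ}
    (A : Matrix (Fin m) (Fin n) ℂ) : 0 ≤ (Matrix.trace (Aᴴ * A)).re := by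
  rw [Matrix.trace]
  simp only [Matrix.diag, Matrix.mul_apply, Matrix.conjTranspose_apply]
  rw [Complex.re_sum]
  apply Finset.sum_nonneg
  intro i _
  rw [Complex.re_sum]
  apply Finset.sum_nonneg
  intro j _
  rw [mul_comm, Complex.star_def, Complex.mul_conj]
  simpa using Complex.normSq_nonneg _

/-- Let `V, H̃, Ĥ ∈ ℂ^{M×N}` be orthonormal with `Ĥᴴ V = 0` (the beams `V` lie
in the nullspace of the quantized channel `Ĥ`).  Then the leaked interference
power `tr(H̃ᴴ V Vᴴ H̃)` is at most the squared chordal quantization error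
`d²(H̃, Ĥ) = N − ‖H̃ᴴ Ĥ‖_F²`. -/
theorem interference_le_chordal {M N : ℕ} (hMN : 2 * N ≤ M)
    (V Ht Hq : Matrix (Fin M) (Fin N) ℂ)
    (hV : Vᴴ * V = 1) (hHt : Htᴴ * Ht = 1) (hHq : Hqᴴ * Hq = 1)
    (horth : Hqᴴ * V = 0) :
    (Matrix.trace (Htᴴ * V * Vᴴ * Ht)).re ≤
      N - (Matrix.trace ((Htᴴ * Hq)ᴴ * (Htᴴ * Hq))).re := by
  have hvq : Vᴴ * Hq = 0 := by
    have := congrArg Matrix.conjTranspose horth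
    simpa using this
  -- S = 1 - V Vᴴ - Hq Hqᴴ is an orthogonal projection
  set S : Matrix (Fin M) (Fin M) ℂ := 1 - V * Vᴴ - Hq * Hqᴴ with hS
  have hSH : Sᴴ = S := by
    simp [hS, Matrix.conjTranspose_sub, Matrix.conjTranspose_mul]
  have hidem : S * S = S := by
    have h1 : V * Vᴴ * (V * Vᴴ) = V * Vᴴ := by
      calc V * Vᴴ * (V * Vᴴ) = V * (Vᴴ * V) * Vᴴ := by simp [Matrix.mul_assoc]
      _ = V * Vᴴ := by rw [hV]; simp [Matrix.mul_assoc]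
    have h2 : Hq * Hqᴴ * (Hq * Hqᴴ) = Hq * Hqᴴ := by
      calc Hq * Hqᴴ * (Hq * Hqᴴ) = Hq * (Hqᴴ * Hq) * Hqᴴ := by simp [Matrix.mul_assoc]
      _ = Hq * Hqᴴ := by rw [hHq]; simp [Matrix.mul_assoc]
    have h3 : V * Vᴴ * (Hq * Hqᴴ) = 0 := by
      calc V * Vᴴ * (Hq * Hqᴴ) = V * (Vᴴ * Hq) * Hqᴴ := by simp [Matrix.mul_assoc]
      _ = 0 := by rw [hvq]; simp
    have h4 : Hq * Hqᴴ * (V * Vᴴ) = 0 := by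
      calc Hq * Hqᴴ * (V * Vᴴ) = Hq * (Hqᴴ * V) * Vᴴ := by simp [Matrix.mul_assoc]
      _ = 0 := by rw [horth]; simp
    simp only [hS, Matrix.sub_mul, Matrix.mul_sub, Matrix.one_mul, Matrix.mul_one,
      h1, h2, h3, h4]
    abel
  have key : Htᴴ * S * Ht = (S * Ht)ᴴ * (S * Ht) := by
    calc Htᴴ * S * Ht = Htᴴ * (S * S) * Ht := by rw [hidem]
    _ = Htᴴ * (Sᴴ * S) * Ht := by rw [hSH]
    _ = (S * Ht)ᴴ * (S * Ht) := by
        rw [Matrix.conjTranspose_mul]; simp [Matrix.mul_assoc]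
  have hpos : 0 ≤ (Matrix.trace (Htᴴ * S * Ht)).re := by
    rw [key]; exact trace_conjTranspose_mul_self_re_nonneg _
  -- expand the trace
  have hexp : Matrix.trace (Htᴴ * S * Ht)
      = (N : ℂ) - Matrix.trace (Htᴴ * V * Vᴴ * Ht)
        - Matrix.trace ((Htᴴ * Hq)ᴴ * (Htᴴ * Hq)) := by
    have e1 : Htᴴ * S * Ht
        = Htᴴ * Ht - Htᴴ * V * Vᴴ * Ht - Htᴴ * Hq * Hqᴴ * Ht := by
      rw [hS]; simp [Matrix.sub_mul, Matrix.mul_sub, Matrix.mul_assoc]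
    rw [e1, Matrix.trace_sub, Matrix.trace_sub, hHt, Matrix.trace_one]
    have e2 : Matrix.trace (Htᴴ * Hq * Hqᴴ * Ht)
        = Matrix.trace ((Htᴴ * Hq)ᴴ * (Htᴴ * Hq)) := by
      rw [Matrix.conjTranspose_mul, Matrix.conjTranspose_conjTranspose]
      rw [show Htᴴ * Hq * Hqᴴ * Ht = (Htᴴ * Hq) * (Hqᴴ * Ht) from Matrix.mul_assoc _ _ _]
      rw [Matrix.trace_mul_comm]
    rw [e2]
    simp [Finset.card_fin]
  rw [hexp] at hpos
  simp only [Complex.sub_re, Complex.natCast_re] at hpos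
  linarith
end

section
/- With D ≤ c·2^{−B/T}, c > 0, T ≥ 1: if B grows as B(P) = T·log₂(P) + const, then the rate loss bound N·log₂(1 + P·D(P)) remains bounded as P → ∞; conversely, if B is held constant, then N·log₂(1 + P·c·2^{−B/T}) → ∞ as P → ∞, growing like N·log₂ P. -/
open Real Filter

/-- With distortion `D(P) = c·2^{−B(P)/T}`: (i) if `B(P) = T·log₂ P + K` then
the rate-loss bound `N·log₂(1 + P·D(P))` stays bounded as `P → ∞`; (ii) if `B`
is held constant at `B₀`, the bound tends to infinity, growing like
`N·log₂ P` (bounded difference). -/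
theorem rate_loss_scaling (N T : ℕ) (hN : 1 ≤ N) (hT : 1 ≤ T)
    (c : ℝ) (hc : 0 < c) :
    (∀ K : ℝ, ∃ L : ℝ, ∀ P : ℝ, 1 ≤ P →
      N * Real.logb 2 (1 + P * (c * (2 : ℝ) ^ (-(T * Real.logb 2 P + K) / T))) ≤ L) ∧
    (∀ B₀ : ℝ,
      Tendsto (fun P : ℝ =>
          N * Real.logb 2 (1 + P * (c * (2 : ℝ) ^ (-B₀ / T)))) atTop atTop ∧
      ∃ L : ℝ, ∀ P : ℝ, 1 ≤ P →
        |N * Real.logb 2 (1 + P * (c * (2 : ℝ) ^ (-B₀ / T))) -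
          N * Real.logb 2 P| ≤ L) := by
  have hT' : (0 : ℝ) < T := by exact_mod_cast hT
  constructor
  · intro K
    refine ⟨N * Real.logb 2 (1 + c * (2 : ℝ) ^ (-K / T)), fun P hP => ?_⟩
    have hP0 : 0 < P := lt_of_lt_of_le one_pos hP
    have hexp : -(T * Real.logb 2 P + K) / T = -Real.logb 2 P + (-K / T) := by
      field_simp; ring
    have h2 : (2 : ℝ) ^ (-(T * Real.logb 2 P + K) / T)
        = P⁻¹ * (2 : ℝ) ^ (-K / T) := by
      rw [hexp, Real.rpow_add two_pos, Real.rpow_neg (by norm_num),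
        Real.rpow_logb two_pos (by norm_num) hP0]
    rw [h2]
    have : P * (c * (P⁻¹ * (2 : ℝ) ^ (-K / T))) = c * (2 : ℝ) ^ (-K / T) := by
      field_simp
    rw [this]
  · intro B₀
    set a : ℝ := c * (2 : ℝ) ^ (-B₀ / T) with ha
    have ha0 : 0 < a := mul_pos hc (Real.rpow_pos_of_pos two_pos _)
    have hN' : (0 : ℝ) < N := by exact_mod_cast hN
    constructor
    · apply Tendsto.const_mul_atTop hN'
      apply (Real.tendsto_logb_atTop (by norm_num : (1:ℝ) < 2)).comp
      apply tendsto_atTop_add_const_left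
      exact Tendsto.atTop_mul_const ha0 tendsto_id
    · refine ⟨N * (|Real.logb 2 a| + |Real.logb 2 (1 + a)|), fun P hP => ?_⟩
      have hP0 : 0 < P := lt_of_lt_of_le one_pos hP
      have h1 : 0 < 1 + P * a := by positivity
      have hub : Real.logb 2 (1 + P * a) ≤ Real.logb 2 P + Real.logb 2 (1 + a) := by
        rw [← Real.logb_mul hP0.ne' (by positivity)]
        apply Real.logb_le_logb_of_le one_lt_two h1
        nlinarith
      have hlb : Real.logb 2 P + Real.logb 2 a ≤ Real.logb 2 (1 + P * a) := by
        rw [← Real.logb_mul hP0.ne' ha0.ne']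
        apply Real.logb_le_logb_of_le one_lt_two (by positivity)
        nlinarith
      rw [← mul_sub, abs_mul, abs_of_pos hN']
      apply mul_le_mul_of_nonneg_left _ hN'.le
      rw [abs_le]
      constructor
      · have := abs_nonneg (Real.logb 2 (1 + a))
        have h2 := neg_abs_le (Real.logb 2 a)
        linarith
      · have := abs_nonneg (Real.logb 2 a)
        have h2 := le_abs_self (Real.logb 2 (1 + a))
        linarith
end

section
/- The constant C_{MN} = (1/T!)·Π_{i=1}^N (M−i)!/(N−i)! with T = N(M−N) satisfies 0 < C_{MN} ≤ 1 for all integers M > N ≥ 1. -/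
open Nat Finset

/-!
Write `M = N + K`. Reindexing by `j = N - i`, the product is `∏_{j<N} (j + 1)⋯(j + K)`, a product
of `N` blocks of `K` consecutive integers, while `T! = (NK)!` is the product of the `N` blocks
`(jK + 1)⋯(jK + K)`. Since `j ≤ jK`, each block of the first kind is at most the corresponding
block of the second kind.
-/

theorem Nat.cast_factorial_add_div_factorial {F : Type*} [Field F] [CharZero F] (n k : ℕ) :
    ((n + k)! : F) / n ! = (n + 1).ascFactorial k := by
  rw [← factorial_mul_ascFactorial, Nat.cast_mul, mul_div_cancel_left₀ _ (Nat.cast_ne_zero.mpr n.factorial_ne_zero)]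

theorem Nat.succ_ascFactorial_le_mul_succ_ascFactorial (n k : ℕ) :
    (n + 1).ascFactorial k ≤ (n * k + 1).ascFactorial k := by
  rcases k.eq_zero_or_pos with rfl | hk
  · simp
  · exact ascFactorial_le k (by nlinarith)

theorem Nat.prod_range_succ_ascFactorial_le_factorial (k : ℕ) :
    ∀ n : ℕ, ∏ j ∈ range n, (j + 1).ascFactorial k ≤ (n * k)!
  | 0 => by simp
  | n + 1 => by
    rw [prod_range_succ, succ_mul, ← factorial_mul_ascFactorial]
    exact Nat.mul_le_mul (prod_range_succ_ascFactorial_le_factorial k n)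
      (succ_ascFactorial_le_mul_succ_ascFactorial n k)

theorem CMN_pos_le_one_general (M N : ℕ) (hMN : N < M) :
    0 < (1 / ((N * (M - N))! : ℝ)) *
        ∏ i ∈ Finset.range N, ((M - (i + 1))! : ℝ) / ((N - (i + 1))! : ℝ) ∧
      (1 / ((N * (M - N))! : ℝ)) *
        ∏ i ∈ Finset.range N, ((M - (i + 1))! : ℝ) / ((N - (i + 1))! : ℝ) ≤ 1 := by
  refine ⟨by positivity, ?_⟩
  obtain ⟨K, rfl⟩ := Nat.exists_eq_add_of_le hMN.le
  have hprod : ∏ i ∈ range N, ((N + K - (i + 1))! : ℝ) / ((N - (i + 1))! : ℝ) =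
      ∏ j ∈ range N, ((j + 1).ascFactorial K : ℝ) := by
    rw [← prod_range_reflect]
    refine prod_congr rfl fun j hj => ?_
    have hj : j < N := mem_range.mp hj
    rw [show N + K - (N - 1 - j + 1) = j + K by omega, show N - (N - 1 - j + 1) = j by omega,
      Nat.cast_factorial_add_div_factorial]
  rw [hprod, one_div_mul_eq_div, div_le_one (by positivity), Nat.add_sub_cancel_left]
  exact_mod_cast prod_range_succ_ascFactorial_le_factorial K N

/-- The constant `C_{MN} = (1/T!)·∏_{i=1}^N (M−i)!/(N−i)!` with `T = N(M−N)`
satisfies `0 < C_{MN} ≤ 1` for all integers `M > N ≥ 1`. -/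
theorem CMN_pos_le_one (M N : ℕ) (hN : 1 ≤ N) (hMN : N < M) :
    0 < (1 / ((N * (M - N))! : ℝ)) *
        ∏ i ∈ Finset.range N, ((M - (i + 1))! : ℝ) / ((N - (i + 1))! : ℝ) ∧
      (1 / ((N * (M - N))! : ℝ)) *
        ∏ i ∈ Finset.range N, ((M - (i + 1))! : ℝ) / ((N - (i + 1))! : ℝ) ≤ 1 :=
  CMN_pos_le_one_general M N hMN
end
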